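/- Let α, β, γ, δ, ε, τ ∈ k, and suppose that I = (t²⁰ + αt²¹ + βt²² + γt²⁷ + δt³³, t²⁶ + εt²⁷ + τt³³) is an Ulrich ideal of A = k⟦t⁵, t¹¹⟧ with I² = (t²⁰ + αt²¹ + βt²² + γt²⁷ + δt³³)·I. Then ε ≠ α, 3ε = 2α, and β = α² − 2ε². -/

import Mathlib

noncomputable section

open PowerSeries

set_option synthInstance.maxHeartbeats 400000
set_option maxHeartbeats 800000

variable (k : Type*) [Field k]

/-- The subalgebra of `k⟦t⟧` consisting of power series supported on an
additive submonoid `S ⊆ ℕ` (the "semigroup ring" of `S`). -/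
def semigroupRing (S : AddSubmonoid ℕ) : Subalgebra k (PowerSeries k) where
  carrier := {f | ∀ n : ℕ, coeff n f ≠ 0 → n ∈ S}
  zero_mem' := by intro n hn; simp at hn
  add_mem' := by
    intro f g hf hg n hn
    by_contra h
    exact hn (by
      rw [map_add, of_not_not fun h1 => h (hf n h1), of_not_not fun h2 => h (hg n h2), add_zero])
  one_mem' := by
    intro n hn
    rw [coeff_one] at hn
    simp only [ne_eq, ite_eq_right_iff, not_forall] at hn
    exact hn.1 ▸ S.zero_mem
  mul_mem' := by
    intro f g hf hg n hn
    rw [coeff_mul] at hn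
    obtain ⟨p, hp, hne⟩ := Finset.exists_ne_zero_of_sum_ne_zero hn
    rw [Finset.HasAntidiagonal.mem_antidiagonal] at hp
    exact hp ▸ S.add_mem (hf p.1 (left_ne_zero_of_mul hne)) (hg p.2 (right_ne_zero_of_mul hne))
  algebraMap_mem' := by
    intro a n hn
    have : (algebraMap k (PowerSeries k)) a = C a := rfl
    rw [this, coeff_C] at hn
    simp only [ne_eq, ite_eq_right_iff, not_forall] at hn
    exact hn.1 ▸ S.zero_mem

lemma X_pow_mem {S : AddSubmonoid ℕ} {n : ℕ} (hn : n ∈ S) :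
    (X : PowerSeries k) ^ n ∈ semigroupRing k S := by
  intro m hm
  rw [coeff_X_pow] at hm
  simp only [ne_eq, ite_eq_right_iff, not_forall] at hm
  exact hm.1 ▸ hn

/-- The maximal ideal of a subalgebra of `k⟦t⟧`: the kernel of the constant-coefficient map. -/
def maximalIdealOf (A : Subalgebra k (PowerSeries k)) : Ideal A :=
  RingHom.ker ((constantCoeff).comp A.val.toRingHom)

/-- `I` is an Ulrich ideal of `A`: `I` is `m`-primary, and there is `a ∈ I` such that `(a)`
is a reduction of `I`, `I ≠ (a)`, `I² = aI`, and `I/I²` is a free `A/I`-module. -/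
def IsUlrichIdeal (A : Subalgebra k (PowerSeries k)) (I : Ideal A) : Prop :=
  I.IsPrimary ∧ I.radical = maximalIdealOf k A ∧
  ∃ a ∈ I, (∃ n : ℕ, I ^ (n + 1) = Ideal.span {a} * I ^ n) ∧
    I ≠ Ideal.span {a} ∧
    I ^ 2 = Ideal.span {a} * I ∧
    Module.Free (A ⧸ I) I.Cotangent

/-- `A = k⟦t⁵, t¹¹⟧`. -/
def A511 : Subalgebra k (PowerSeries k) :=
  semigroupRing k (AddSubmonoid.closure ({5, 11} : Set ℕ))

lemma mem511 {n : ℕ} (a b : ℕ) (h : a * 5 + b * 11 = n) :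
    n ∈ AddSubmonoid.closure ({5, 11} : Set ℕ) := by
  subst h
  have h5 : (5 : ℕ) ∈ AddSubmonoid.closure ({5, 11} : Set ℕ) :=
    AddSubmonoid.subset_closure (by norm_num)
  have h11 : (11 : ℕ) ∈ AddSubmonoid.closure ({5, 11} : Set ℕ) :=
    AddSubmonoid.subset_closure (by norm_num)
  simpa [smul_eq_mul] using add_mem (nsmul_mem h5 a) (nsmul_mem h11 b)

/-- `f = t²⁰ + αt²¹ + βt²² + γt²⁷ + δt³³` as an element of `A = k⟦t⁵,t¹¹⟧`. -/
def genF (α β γ δ : k) : A511 k :=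
  ⟨X ^ 20 + α • X ^ 21 + β • X ^ 22 + γ • X ^ 27 + δ • X ^ 33, by
    refine add_mem (add_mem (add_mem (add_mem (X_pow_mem k (mem511 4 0 (by norm_num)))
      (Subalgebra.smul_mem _ (X_pow_mem k (mem511 2 1 (by norm_num))) α))
      (Subalgebra.smul_mem _ (X_pow_mem k (mem511 0 2 (by norm_num))) β))
      (Subalgebra.smul_mem _ (X_pow_mem k (mem511 1 2 (by norm_num))) γ))
      (Subalgebra.smul_mem _ (X_pow_mem k (mem511 0 3 (by norm_num))) δ)⟩

/-- `g = t²⁶ + εt²⁷ + τt³³` as an element of `A = k⟦t⁵,t¹¹⟧`. -/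
def genG (ε τ : k) : A511 k :=
  ⟨X ^ 26 + ε • X ^ 27 + τ • X ^ 33, by
    refine add_mem (add_mem (X_pow_mem k (mem511 3 1 (by norm_num)))
      (Subalgebra.smul_mem _ (X_pow_mem k (mem511 1 2 (by norm_num))) ε))
      (Subalgebra.smul_mem _ (X_pow_mem k (mem511 0 3 (by norm_num))) τ)⟩

/-- `f = t¹⁰ + α₁t¹¹ + α₂t¹⁶ + α₃t²²` as an element of `A = k⟦t⁵,t¹¹⟧`. -/
def genF10 (α₁ α₂ α₃ : k) : A511 k :=
  ⟨X ^ 10 + α₁ • X ^ 11 + α₂ • X ^ 16 + α₃ • X ^ 22, by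
    refine add_mem (add_mem (add_mem (X_pow_mem k (mem511 2 0 (by norm_num)))
      (Subalgebra.smul_mem _ (X_pow_mem k (mem511 0 1 (by norm_num))) α₁))
      (Subalgebra.smul_mem _ (X_pow_mem k (mem511 1 1 (by norm_num))) α₂))
      (Subalgebra.smul_mem _ (X_pow_mem k (mem511 0 2 (by norm_num))) α₃)⟩

/-- `g = t²⁷` as an element of `A = k⟦t⁵,t¹¹⟧`. -/
def genG27 : A511 k :=
  ⟨X ^ 27, X_pow_mem k (mem511 1 2 (by norm_num))⟩

/-- `t³² + εt³³` as an element of `A = k⟦t⁵,t¹¹⟧`. -/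
def elt32 (ε : k) : A511 k :=
  ⟨X ^ 32 + ε • X ^ 33, by
    refine add_mem (X_pow_mem k (mem511 2 2 (by norm_num)))
      (Subalgebra.smul_mem _ (X_pow_mem k (mem511 0 3 (by norm_num))) ε)⟩

/- If `I = (f, g)` with `I² = fI`, then `h := g²/f` lies in `I`, and in `k⟦t⟧`
`h = t³² (1 + (2ε - α) t + ((α - ε)² - β) t² + ⋯)`. Write `h = uf + vg` with `u, v ∈ A`. As the
degrees `1, …, 4, 6, …, 9, 12, 13, 14` are gaps of `⟨5, 11⟩`, comparing the coefficients of
`t²⁰, …, t³⁴` forces `u = c t¹¹ + ⋯` and `v = -c t⁵ + ⋯` with `c (α - ε) = 1`, `c β = 2ε - α`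
and `(α - ε)² = β`; these three equations give the claim. -/

theorem semigroupRing.coeff_eq_zero_of_notMem {S : AddSubmonoid ℕ} (w : semigroupRing k S)
    {n : ℕ} (hn : n ∉ S) : coeff n (w : k⟦X⟧) = 0 :=
  not_not.mp (mt (w.2 n) hn)

theorem A511.coeff_eq_zero_of_forall_ne (w : A511 k) {n : ℕ}
    (hn : ∀ a b : ℕ, a * 5 + b * 11 ≠ n) : coeff n (w : k⟦X⟧) = 0 := by
  refine semigroupRing.coeff_eq_zero_of_notMem k w ?_
  rw [AddSubmonoid.mem_closure_pair]
  rintro ⟨a, b, hab⟩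
  exact hn a b (by simpa only [smul_eq_mul] using hab)

theorem A511.exists_eq_add_X_pow_mul (w : A511 k) :
    ∃ c₀ c₅ c₁₀ c₁₁ : k, ∃ r : k⟦X⟧,
      (w : k⟦X⟧) = C c₀ + C c₅ * X ^ 5 + C c₁₀ * X ^ 10 + C c₁₁ * X ^ 11 + X ^ 15 * r := by
  refine ⟨coeff 0 (w : k⟦X⟧), coeff 5 (w : k⟦X⟧), coeff 10 (w : k⟦X⟧), coeff 11 (w : k⟦X⟧), ?_⟩
  obtain ⟨r, hr⟩ : X ^ 15 ∣ (w : k⟦X⟧) - (C (coeff 0 (w : k⟦X⟧)) + C (coeff 5 (w : k⟦X⟧)) * X ^ 5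
      + C (coeff 10 (w : k⟦X⟧)) * X ^ 10 + C (coeff 11 (w : k⟦X⟧)) * X ^ 11) := by
    refine X_pow_dvd_iff.mpr fun m hm => ?_
    interval_cases m <;> simp <;> exact A511.coeff_eq_zero_of_forall_ne k w (by omega)
  exact ⟨r, by rw [← hr]; ring⟩

theorem coe_genF (α β γ δ : k) : (genF k α β γ δ : k⟦X⟧) =
    X ^ 20 * (1 + C α * X + C β * X ^ 2 + C γ * X ^ 7 + C δ * X ^ 13) := by
  simp only [genF, smul_eq_C_mul]
  ring

theorem coe_genG (ε τ : k) : (genG k ε τ : k⟦X⟧) = X ^ 26 * (1 + C ε * X + C τ * X ^ 7) := by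
  simp only [genG, smul_eq_C_mul]
  ring

theorem PowerSeries.eq_X_pow_mul_inv_mul_of_mul_eq {K : Type*} [Field K] {a b h : K⟦X⟧}
    {m n : ℕ} (ha : constantCoeff a ≠ 0) (H : X ^ m * a * h = X ^ (m + n) * b) :
    h = X ^ n * (a⁻¹ * b) := by
  rw [pow_add, mul_assoc, mul_assoc] at H
  calc h = a⁻¹ * (a * h) := by rw [← mul_assoc, PowerSeries.inv_mul_cancel _ ha, one_mul]
    _ = X ^ n * (a⁻¹ * b) := by rw [mul_left_cancel₀ (pow_ne_zero m X_ne_zero) H]; ring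

theorem PowerSeries.coeff_le_two_of_mul_eq {R : Type*} [CommRing R] {α β ε₁ ε₂ : R}
    {p q s : R⟦X⟧}
    (H : (1 + C α * X + C β * X ^ 2 + X ^ 3 * p) * q = 1 + C ε₁ * X + C ε₂ * X ^ 2 + X ^ 3 * s) :
    coeff 0 q = 1 ∧ coeff 1 q = ε₁ - α ∧ coeff 2 q = ε₂ - α * (ε₁ - α) - β := by
  simp only [add_mul, mul_assoc] at H
  have e n := congrArg (coeff n) H
  have e₀ : coeff 0 q = 1 := by simpa [coeff_X_pow_mul'] using e 0
  have e₁ : coeff 1 q + α * coeff 0 q = ε₁ := by simpa [coeff_X_pow_mul'] using e 1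
  have e₂ : coeff 2 q + α * coeff 1 q + β * coeff 0 q = ε₂ := by
    simpa [coeff_X_pow_mul', coeff_X_pow] using e 2
  exact ⟨e₀, by linear_combination e₁ - α * e₀,
    by linear_combination e₂ - α * e₁ + (α ^ 2 - β) * e₀⟩

theorem exists_eq_X_pow_mul_of_genF_mul_eq (α β γ δ ε τ : k) {h : k⟦X⟧}
    (H : (genF k α β γ δ : k⟦X⟧) * h = genG k ε τ * genG k ε τ) :
    ∃ q : k⟦X⟧, h = X ^ 32 * q ∧
      coeff 0 q = 1 ∧ coeff 1 q = 2 * ε - α ∧ coeff 2 q = (α - ε) ^ 2 - β := by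
  set F := 1 + C α * X + C β * X ^ 2 + C γ * X ^ 7 + C δ * X ^ 13
  set G := 1 + C ε * X + C τ * X ^ 7
  have hF : constantCoeff F ≠ 0 := by simp [F]
  have hG : F * (F⁻¹ * G ^ 2) =
      1 + C (2 * ε) * X + C (ε ^ 2) * X ^ 2 + X ^ 3 * (C (2 * τ) * X ^ 4 + C (2 * ε * τ) * X ^ 5
        + C (τ ^ 2) * X ^ 11) := by
    rw [← mul_assoc, PowerSeries.mul_inv_cancel _ hF, one_mul]
    simp only [G, map_mul, map_pow, map_ofNat]
    ring
  obtain ⟨h₀, h₁, h₂⟩ := PowerSeries.coeff_le_two_of_mul_eq (α := α) (β := β)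
    (p := C γ * X ^ 4 + C δ * X ^ 10) (q := F⁻¹ * G ^ 2) (by rw [← hG]; ring)
  refine ⟨F⁻¹ * G ^ 2, PowerSeries.eq_X_pow_mul_inv_mul_of_mul_eq (m := 20) hF ?_, h₀, h₁,
    h₂.trans (by ring)⟩
  rw [← coe_genF, H, coe_genG]
  ring

theorem exists_coeff_eqs_of_mem_span (α β γ δ ε τ : k) {h : A511 k}
    (hI : h ∈ Ideal.span {genF k α β γ δ, genG k ε τ}) {q : k⟦X⟧} (hq : (h : k⟦X⟧) = X ^ 32 * q) :
    ∃ c : k, c * (α - ε) = coeff 0 q ∧ c * β = coeff 1 q ∧ coeff 2 q = 0 := by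
  obtain ⟨u, v, rfl⟩ := Ideal.mem_span_pair.mp hI
  obtain ⟨c₀, c₅, c₁₀, c₁₁, r, hu⟩ := A511.exists_eq_add_X_pow_mul k u
  obtain ⟨d₀, d₅, d₁₀, d₁₁, s, hv⟩ := A511.exists_eq_add_X_pow_mul k v
  have H : X ^ 20 * (X ^ 12 * q) = X ^ 20 *
      ((C c₀ + C c₅ * X ^ 5 + C c₁₀ * X ^ 10 + C c₁₁ * X ^ 11 + X ^ 15 * r) *
          (1 + C α * X + C β * X ^ 2 + C γ * X ^ 7 + C δ * X ^ 13) +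
        X ^ 6 * (C d₀ + C d₅ * X ^ 5 + C d₁₀ * X ^ 10 + C d₁₁ * X ^ 11 + X ^ 15 * s) *
          (1 + C ε * X + C τ * X ^ 7)) := by
    rw [← mul_assoc, ← pow_add, ← hq]
    push_cast
    rw [hu, hv, coe_genF, coe_genG]
    ring
  replace H := mul_left_cancel₀ (pow_ne_zero 20 X_ne_zero) H
  simp only [add_mul, mul_add, mul_assoc] at H
  have e n := congrArg (coeff n) H
  have e₀ : 0 = c₀ := by simpa [coeff_X_pow_mul'] using e 0
  have e₅ : 0 = c₅ := by simpa [coeff_X_pow_mul'] using e 5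
  have e₆ : 0 = c₅ * α + d₀ := by simpa [coeff_X_pow_mul'] using e 6
  have e₁₀ : 0 = c₁₀ := by simpa [coeff_X_pow_mul'] using e 10
  have e₁₁ : 0 = c₁₁ + c₁₀ * α + d₅ := by simpa [coeff_X_pow_mul'] using e 11
  have e₁₂ : coeff 0 q = c₁₁ * α + c₁₀ * β + c₅ * γ + d₅ * ε := by
    simpa [coeff_X_pow_mul'] using e 12
  have e₁₃ : coeff 1 q = c₁₁ * β + c₀ * δ + d₀ * τ := by simpa [coeff_X_pow_mul'] using e 13
  have e₁₄ : coeff 2 q = 0 := by simpa [coeff_X_pow_mul'] using e 14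
  refine ⟨c₁₁, ?_, ?_, e₁₄⟩
  · linear_combination -e₁₂ + ε * e₁₁ + (β - ε * α) * e₁₀ + γ * e₅
  · linear_combination -e₁₃ + δ * e₀ + τ * e₆ - τ * α * e₅

theorem coeff_relations_of_mul_sub_eq_one {R : Type*} [CommRing R] [Nontrivial R] {α β ε c : R}
    (h₁ : c * (α - ε) = 1) (h₂ : c * β = 2 * ε - α) (h₃ : (α - ε) ^ 2 - β = 0) :
    ε ≠ α ∧ 3 * ε = 2 * α ∧ β = α ^ 2 - 2 * ε ^ 2 := by
  have hε : 3 * ε = 2 * α := by linear_combination (α - ε) * h₁ - h₂ - c * h₃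
  refine ⟨?_, hε, by linear_combination -h₃ + ε * hε⟩
  rintro rfl
  simp at h₁

theorem ulrich_511_orders_20_26_coeff_relations (α β γ δ ε τ : k)
    (hred : (Ideal.span {genF k α β γ δ, genG k ε τ}) ^ 2
         = Ideal.span {genF k α β γ δ} * Ideal.span {genF k α β γ δ, genG k ε τ}) :
    ε ≠ α ∧ 3 * ε = 2 * α ∧ β = α ^ 2 - 2 * ε ^ 2 := by
  have hg : genG k ε τ * genG k ε τ ∈ (Ideal.span {genF k α β γ δ, genG k ε τ}) ^ 2 := by
    rw [sq]
    exact Ideal.mul_mem_mul (Ideal.subset_span (by simp)) (Ideal.subset_span (by simp))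
  obtain ⟨h, hI, hfh⟩ := Ideal.mem_span_singleton_mul.mp (hred ▸ hg)
  obtain ⟨q, hq, hq₀, hq₁, hq₂⟩ :=
    exists_eq_X_pow_mul_of_genF_mul_eq k α β γ δ ε τ (h := h) (congrArg Subtype.val hfh)
  obtain ⟨c, h₁, h₂, h₃⟩ := exists_coeff_eqs_of_mem_span k α β γ δ ε τ hI hq
  exact coeff_relations_of_mul_sub_eq_one (h₁.trans hq₀) (h₂.trans hq₁) (hq₂ ▸ h₃)
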